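/- arXiv:2203.13624 — 3 statements merged into one kernel-verified Lean document; each statement's English description precedes it below -/
import Mathlib

section
/- Let φ : [0,∞) → [0,∞) be increasing with φ(0)=0, and suppose t ↦ φ(t)/t^p is L-almost increasing on (0,∞) for some p > 1 (i.e. φ(s)/s^p ≤ L φ(t)/t^p for 0 < s ≤ t). Then the conjugate φ*(s) = sup_{t>0}(st − φ(t)) satisfies: t ↦ φ*(t)/t^{p'} is almost decreasing on (0,∞), where p' = p/(p−1), with a constant depending only on L and p. -/
/-! Rescale the variable of the supremum. For `0 < s ≤ t` take `a = (s / (L t))^{1/(p-1)} ≤ 1`,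
so that `L a^p t = a s`. Almost increase of `φ(u)/u^p` gives `φ(a u) ≤ L a^p φ(u)`, hence
`k (t u - φ u) ≤ s (a u) - φ (a u)` with `k = L a^p = (s/t)^{p'} / L^{1/(p-1)}`; taking suprema,
`k φ*(t) ≤ φ*(s)`. -/

/-- The conjugate `φ*(s) = sup_{t>0} (s·t − φ(t))` of a real-valued `φ`, with values in `[0,∞]`. -/
noncomputable def conjPhi (φ : ℝ → ℝ) (s : ℝ) : ENNReal :=
  ⨆ (t : ℝ) (_ : 0 < t), ENNReal.ofReal (s * t - φ t)

theorem ENNReal.div_ofReal_le_of_ofReal_div_mul_le {X Y : ENNReal} {c s t : ℝ}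
    (hc : 0 < c) (hs : 0 < s) (ht : 0 < t) (h : ENNReal.ofReal (s / (c * t)) * X ≤ Y) :
    X / ENNReal.ofReal t ≤ ENNReal.ofReal c * (Y / ENNReal.ofReal s) := by
  set k := s / (c * t) with hk
  calc X / ENNReal.ofReal t = ENNReal.ofReal (c * k / s) * X := by
        rw [show c * k / s = t⁻¹ by rw [hk]; field_simp, ENNReal.ofReal_inv_of_pos ht,
          ENNReal.div_eq_inv_mul]
    _ = ENNReal.ofReal c * (ENNReal.ofReal k * X / ENNReal.ofReal s) := by
        rw [ENNReal.ofReal_div_of_pos hs, ENNReal.ofReal_mul hc.le]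
        simp only [div_eq_mul_inv]
        ring
    _ ≤ ENNReal.ofReal c * (Y / ENNReal.ofReal s) := by gcongr

theorem ofReal_mul_conjPhi_le_of_scaling {φ : ℝ → ℝ} {s t k a : ℝ} (hk : 0 ≤ k) (ha : 0 < a)
    (hkt : k * t ≤ s * a) (hφ : ∀ u, 0 < u → φ (a * u) ≤ k * φ u) :
    ENNReal.ofReal k * conjPhi φ t ≤ conjPhi φ s := by
  simp only [conjPhi, ENNReal.mul_iSup]
  refine iSup₂_le fun u hu => ?_
  have hscaled : k * (t * u - φ u) ≤ s * (a * u) - φ (a * u) := by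
    nlinarith [hφ u hu, mul_le_mul_of_nonneg_right hkt hu.le]
  calc ENNReal.ofReal k * ENNReal.ofReal (t * u - φ u)
      = ENNReal.ofReal (k * (t * u - φ u)) := (ENNReal.ofReal_mul hk).symm
    _ ≤ ENNReal.ofReal (s * (a * u) - φ (a * u)) := ENNReal.ofReal_le_ofReal hscaled
    _ ≤ ⨆ (v : ℝ) (_ : 0 < v), ENNReal.ofReal (s * v - φ v) :=
      le_iSup₂ (f := fun v (_ : 0 < v) => ENNReal.ofReal (s * v - φ v)) (a * u) (by positivity)

theorem apply_mul_le_of_aInc {φ : ℝ → ℝ} {p L a u : ℝ}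
    (haInc : ∀ s t : ℝ, 0 < s → s ≤ t → φ s / s ^ p ≤ L * (φ t / t ^ p))
    (ha0 : 0 < a) (ha1 : a ≤ 1) (hu : 0 < u) : φ (a * u) ≤ L * a ^ p * φ u := by
  have hau : 0 < a * u := by positivity
  have h := haInc (a * u) u hau (mul_le_of_le_one_left hu.le ha1)
  rw [div_le_iff₀ (Real.rpow_pos_of_pos hau p), Real.mul_rpow ha0.le hu.le] at h
  calc φ (a * u) ≤ L * (φ u / u ^ p) * (a ^ p * u ^ p) := h
    _ = L * a ^ p * φ u := by field_simp [(Real.rpow_pos_of_pos hu p).ne']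

theorem ofReal_mul_conjPhi_le_of_aInc {φ : ℝ → ℝ} {p L s t : ℝ} (hp : 1 < p) (hL : 1 ≤ L)
    (haInc : ∀ s t : ℝ, 0 < s → s ≤ t → φ s / s ^ p ≤ L * (φ t / t ^ p))
    (hs : 0 < s) (hst : s ≤ t) :
    ENNReal.ofReal (s ^ (p / (p - 1)) / (L ^ (p - 1)⁻¹ * t ^ (p / (p - 1)))) * conjPhi φ t ≤
      conjPhi φ s := by
  have ht : 0 < t := hs.trans_le hst
  have hL0 : 0 < L := zero_lt_one.trans_le hL
  have hp1 : p - 1 ≠ 0 := (sub_pos.2 hp).ne'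
  set r := (p - 1)⁻¹
  have hr : 0 < r := inv_pos.2 (sub_pos.2 hp)
  have hq : p / (p - 1) = 1 + r := by simp only [r]; field_simp; ring
  set a := (s / (L * t)) ^ r with ha_def
  have ha0 : 0 < a := by positivity
  have ha1 : a ≤ 1 := by
    refine Real.rpow_le_one (by positivity) ?_ hr.le
    rw [div_le_one (by positivity)]
    exact hst.trans (le_mul_of_one_le_left ht.le hL)
  have ha_pow : a ^ (p - 1) = s / (L * t) := by
    rw [ha_def, ← Real.rpow_mul (by positivity), inv_mul_cancel₀ hp1, Real.rpow_one]
  have hLa : L * a ^ p = s * a / t := by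
    rw [← sub_add_cancel p 1, Real.rpow_add ha0, Real.rpow_one, ha_pow]
    field_simp
  have hk : s * a / t = s ^ (p / (p - 1)) / (L ^ r * t ^ (p / (p - 1))) := by
    rw [ha_def, Real.div_rpow hs.le (by positivity), Real.mul_rpow hL0.le ht.le, hq,
      Real.rpow_add hs, Real.rpow_add ht, Real.rpow_one, Real.rpow_one]
    field_simp
  rw [← hk]
  refine ofReal_mul_conjPhi_le_of_scaling (by positivity) ha0 (div_mul_cancel₀ _ ht.ne').le
    fun u hu => ?_
  rw [← hLa]
  exact apply_mul_le_of_aInc haInc ha0 ha1 hu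

theorem stmt2_general (φ : ℝ → ℝ) (p L : ℝ) (hp : 1 < p) (hL : 1 ≤ L)
    (haInc : ∀ s t : ℝ, 0 < s → s ≤ t → φ s / s ^ p ≤ L * (φ t / t ^ p)) :
    ∃ C : ℝ, 1 ≤ C ∧ ∀ s t : ℝ, 0 < s → s ≤ t →
      conjPhi φ t / ENNReal.ofReal (t ^ (p / (p - 1))) ≤
        ENNReal.ofReal C * (conjPhi φ s / ENNReal.ofReal (s ^ (p / (p - 1)))) := by
  refine ⟨L ^ (p - 1)⁻¹, Real.one_le_rpow hL (inv_nonneg.2 (sub_pos.2 hp).le),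
    fun s t hs hst => ?_⟩
  have ht : 0 < t := hs.trans_le hst
  exact ENNReal.div_ofReal_le_of_ofReal_div_mul_le (by positivity) (by positivity)
    (by positivity) (ofReal_mul_conjPhi_le_of_aInc hp hL haInc hs hst)

/-- If `φ` is increasing with `φ(0)=0` and `t ↦ φ(t)/t^p` is `L`-almost increasing for some
`p > 1`, then `t ↦ φ*(t)/t^{p'}` is almost decreasing with constant depending only on `L, p`. -/
theorem stmt2 (φ : ℝ → ℝ) (p L : ℝ) (hp : 1 < p) (hL : 1 ≤ L)
    (hmono : MonotoneOn φ (Set.Ici 0)) (h0 : φ 0 = 0) (hnn : ∀ t, 0 ≤ t → 0 ≤ φ t)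
    (haInc : ∀ s t : ℝ, 0 < s → s ≤ t → φ s / s ^ p ≤ L * (φ t / t ^ p)) :
    ∃ C : ℝ, 1 ≤ C ∧ ∀ s t : ℝ, 0 < s → s ≤ t →
      conjPhi φ t / ENNReal.ofReal (t ^ (p / (p - 1))) ≤
        ENNReal.ofReal C * (conjPhi φ s / ENNReal.ofReal (s ^ (p / (p - 1)))) :=
  stmt2_general φ p L hp hL haInc
end

section
/- Let φ : [0,∞) → [0,∞) be a weak Φ-function satisfying (aInc)_p with constant L_p and (aDec)_q with constant L_q, where 1 < p ≤ q < ∞, and let φ* be its conjugate. Then there is a constant C = C(p, q, L_p, L_q) such that φ*(φ(t)/t) ≤ C φ(t) for all t > 0. -/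
/-!
For `u ≤ t` the term `φ(t)/t · u − φ(u)` is at most `φ(t)`. For `u = r t` with `r > 1`,
`(aInc)_p` gives `φ(u) ≥ r^p φ(t) / L_p`, so the term is at most `φ(t) (r − r^p / L_p)`,
and `r − r^p / L_p ≤ L_p^{1/(p-1)}` uniformly in `r ≥ 0`.
-/

open Filter Topology

lemma sub_rpow_div_le_rpow_inv {r L p : ℝ} (hr : 0 ≤ r) (hL : 0 < L) (hp : 1 < p) :
    r - r ^ p / L ≤ L ^ (p - 1)⁻¹ := by
  have hp1 : 0 < p - 1 := by linarith
  have hrp : 0 ≤ r ^ p / L := div_nonneg (Real.rpow_nonneg hr p) hL.le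
  rcases le_or_gt L (r ^ (p - 1)) with hlarge | hsmall
  · have hrL : r * L ≤ r ^ p := by
      calc r * L ≤ r * r ^ (p - 1) := mul_le_mul_of_nonneg_left hlarge hr
        _ = r ^ p := by rw [← Real.rpow_one_add' hr (by linarith)]; ring_nf
    have : r ≤ r ^ p / L := (le_div_iff₀ hL).2 hrL
    linarith [Real.rpow_nonneg hL.le (p - 1)⁻¹]
  · have hrc : r < L ^ (p - 1)⁻¹ := by
      calc r = (r ^ (p - 1)) ^ (p - 1)⁻¹ := by
            rw [← Real.rpow_mul hr, mul_inv_cancel₀ hp1.ne', Real.rpow_one]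
        _ < L ^ (p - 1)⁻¹ :=
            Real.rpow_lt_rpow (Real.rpow_nonneg hr _) hsmall (inv_pos.2 hp1)
    linarith

lemma mul_div_rpow_le_of_almostIncreasing {φ : ℝ → ℝ} {p L t u : ℝ}
    (haInc : ∀ s t : ℝ, 0 < s → s ≤ t → φ s / s ^ p ≤ L * (φ t / t ^ p))
    (ht : 0 < t) (htu : t ≤ u) : φ t * (u / t) ^ p ≤ L * φ u := by
  have htp : 0 < t ^ p := Real.rpow_pos_of_pos ht p
  have hup : 0 < u ^ p := Real.rpow_pos_of_pos (ht.trans_le htu) p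
  have h := haInc t u ht htu
  rw [Real.div_rpow (ht.trans_le htu).le ht.le, ← mul_div_assoc, div_le_iff₀ htp]
  rw [div_le_iff₀ htp, mul_div_assoc', div_mul_eq_mul_div, le_div_iff₀ hup] at h
  linarith

lemma div_mul_sub_le_of_almostIncreasing {φ : ℝ → ℝ} {p L t u : ℝ} (hp : 1 < p) (hL : 1 ≤ L)
    (hnn : ∀ t, 0 ≤ t → 0 ≤ φ t)
    (haInc : ∀ s t : ℝ, 0 < s → s ≤ t → φ s / s ^ p ≤ L * (φ t / t ^ p))
    (ht : 0 < t) (hu : 0 < u) : φ t / t * u - φ u ≤ L ^ (p - 1)⁻¹ * φ t := by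
  have hφt := hnn t ht.le
  have hc : 1 ≤ L ^ (p - 1)⁻¹ := Real.one_le_rpow hL (inv_nonneg.2 (by linarith))
  have hsplit : φ t / t * u = φ t * (u / t) := by field_simp
  rcases le_or_gt u t with hut | htu
  · have : φ t * (u / t) ≤ φ t :=
      mul_le_of_le_one_right hφt ((div_le_one ht).2 hut)
    nlinarith [hnn u hu.le]
  · have hL0 : 0 < L := by linarith
    have hφu : φ t * (u / t) ^ p / L ≤ φ u :=
      (div_le_iff₀' hL0).2 (mul_div_rpow_le_of_almostIncreasing haInc ht htu.le)
    have hr := sub_rpow_div_le_rpow_inv (div_pos hu ht).le hL0 hp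
    calc φ t / t * u - φ u ≤ φ t * (u / t - (u / t) ^ p / L) := by
          rw [hsplit]; linarith [mul_div_assoc (φ t) ((u / t) ^ p) L]
      _ ≤ L ^ (p - 1)⁻¹ * φ t := by nlinarith

theorem stmt6_general (φ : ℝ → ℝ) (p Lp : ℝ) (hp : 1 < p) (hLp : 1 ≤ Lp)
    (hnn : ∀ t, 0 ≤ t → 0 ≤ φ t)
    (haInc : ∀ s t : ℝ, 0 < s → s ≤ t → φ s / s ^ p ≤ Lp * (φ t / t ^ p)):
    ∃ C : ℝ, 0 < C ∧ ∀ t : ℝ, 0 < t →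
      conjPhi φ (φ t / t) ≤ ENNReal.ofReal (C * φ t) := by
  refine ⟨Lp ^ (p - 1)⁻¹, Real.rpow_pos_of_pos (by linarith) _, fun t ht => ?_⟩
  exact iSup₂_le fun u hu => ENNReal.ofReal_le_ofReal
    (div_mul_sub_le_of_almostIncreasing hp hLp hnn haInc ht hu)

/-- For a weak Φ-function `φ` satisfying `(aInc)_p` and `(aDec)_q` with `1 < p ≤ q < ∞`,
there is `C = C(p,q,L_p,L_q)` with `φ*(φ(t)/t) ≤ C φ(t)` for all `t > 0`. -/
theorem stmt6 (φ : ℝ → ℝ) (p q Lp Lq : ℝ) (hp : 1 < p) (hpq : p ≤ q) (hLp : 1 ≤ Lp) (hLq : 1 ≤ Lq)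
    (hmono : MonotoneOn φ (Set.Ici 0)) (h0 : φ 0 = 0) (hnn : ∀ t, 0 ≤ t → 0 ≤ φ t)
    (hlim0 : Tendsto φ (nhdsWithin 0 (Set.Ioi 0)) (nhds 0))
    (hliminf : Tendsto φ atTop atTop)
    (haInc : ∀ s t : ℝ, 0 < s → s ≤ t → φ s / s ^ p ≤ Lp * (φ t / t ^ p))
    (haDec : ∀ s t : ℝ, 0 < s → s ≤ t → φ t / t ^ q ≤ Lq * (φ s / s ^ q)) :
    ∃ C : ℝ, 0 < C ∧ ∀ t : ℝ, 0 < t →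
      conjPhi φ (φ t / t) ≤ ENNReal.ofReal (C * φ t) :=
  stmt6_general φ p Lp hp hLp hnn haInc
end

section
/- Let φ, ψ : [0,∞) → [0,∞) be weak Φ-functions each satisfying (aInc)_{p_k} with p_1, p_2 > 1 respectively and structural constants c_1, c_2 > 0, and let A : ℝⁿ → ℝⁿ satisfy c_1 φ(|ξ|) ≤ A(ξ)·ξ and |A(ξ)| ≤ c_2 φ(|ξ|)/|ξ| for ξ ≠ 0. Suppose (ξ_i) ⊂ ℝⁿ with |ξ_i| → ∞, η ∈ ℝⁿ fixed, and numbers I_i := (A(ξ_i) − A(η))·(ξ_i − η) bounded. Then one obtains a contradiction with (aInc)_p for p > 1: the sequence (ξ_i) must be bounded. Formally: under the above structure conditions, if sup_i I_i < ∞ then sup_i |ξ_i| < ∞. -/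
open Filter Topology

/-! Writing `t = ‖ξ‖`, the pairing `(A ξ − A η)·(ξ − η)` is at least
`c₁ φ(t) − c₂ ‖η‖ φ(t)/t − ‖A η‖ t − ‖A η‖ ‖η‖`. By `(aInc)_p` with `p > 1`, `φ(t) ≥ a t^p` for
large `t`, so `φ(t)/t → ∞` and this lower bound tends to infinity; a bound on the pairings
therefore bounds `‖ξ_i‖`. -/

theorem le_real_inner_sub_sub {E : Type*} [NormedAddCommGroup E] [InnerProductSpace ℝ E]
    (a b x y : E) :
    inner ℝ a x - ‖a‖ * ‖y‖ - ‖b‖ * ‖x‖ - ‖b‖ * ‖y‖ ≤ inner ℝ (a - b) (x - y) := by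
  have hay := abs_le.mp (abs_real_inner_le_norm a y)
  have hbx := abs_le.mp (abs_real_inner_le_norm b x)
  have hby := abs_le.mp (abs_real_inner_le_norm b y)
  rw [inner_sub_left, inner_sub_right, inner_sub_right]
  linarith [hay.2, hbx.2, hby.1]

section AlmostIncreasing

variable {φ : ℝ → ℝ} {p L : ℝ}

theorem exists_pos_mul_rpow_le_of_almostIncreasing
    (hInc : ∀ s t : ℝ, 0 < s → s ≤ t → φ s / s ^ p ≤ L * (φ t / t ^ p))
    {s : ℝ} (hs : 0 < s) (hφs : 0 < φ s) :
    ∃ a > 0, ∀ t ≥ s, a * t ^ p ≤ φ t := by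
  have hq : 0 < φ s / s ^ p := div_pos hφs (Real.rpow_pos_of_pos hs p)
  -- `(aInc)` at `s = t` forces `L ≥ 1` as soon as `φ` is positive somewhere.
  have hL : 0 < L := by
    by_contra! hL
    nlinarith [hInc s s hs le_rfl]
  refine ⟨φ s / s ^ p / L, div_pos hq hL, fun t hst => ?_⟩
  have htp : 0 < t ^ p := Real.rpow_pos_of_pos (hs.trans_le hst) p
  rw [← le_div_iff₀ htp, div_le_iff₀' hL]
  exact hInc s t hs hst

theorem tendsto_div_self_atTop_of_almostIncreasing (hp : 1 < p)
    (hφ : Tendsto φ atTop atTop)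
    (hInc : ∀ s t : ℝ, 0 < s → s ≤ t → φ s / s ^ p ≤ L * (φ t / t ^ p)) :
    Tendsto (fun t => φ t / t) atTop atTop := by
  obtain ⟨s, hφs, hs⟩ := ((hφ.eventually_gt_atTop 0).and (eventually_gt_atTop 0)).exists
  obtain ⟨a, ha, hlow⟩ := exists_pos_mul_rpow_le_of_almostIncreasing hInc hs hφs
  refine tendsto_atTop_mono' _ ?_ ((tendsto_rpow_atTop (sub_pos.mpr hp)).const_mul_atTop ha)
  filter_upwards [eventually_ge_atTop s] with t hst
  have ht : 0 < t := hs.trans_le hst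
  rw [Real.rpow_sub_one ht.ne', mul_div_assoc']
  exact div_le_div_of_nonneg_right (hlow t hst) ht.le

end AlmostIncreasing

theorem tendsto_mul_sub_mul_div_sub_mul_atTop {φ : ℝ → ℝ} {c : ℝ} (d b : ℝ) (hc : 0 < c)
    (hφ : Tendsto (fun t => φ t / t) atTop atTop) :
    Tendsto (fun t => c * φ t - d * (φ t / t) - b * t) atTop atTop := by
  have hcoef : Tendsto (fun t : ℝ => c - d / t) atTop (𝓝 c) := by
    simpa using tendsto_const_nhds.sub ((tendsto_const_nhds (x := d)).div_atTop tendsto_id)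
  have hinner : Tendsto (fun t => φ t / t * (c - d / t) - b) atTop atTop :=
    tendsto_atTop_add_const_right _ (-b) (hφ.atTop_mul_pos hc hcoef)
  refine (tendsto_id.atTop_mul_atTop₀ hinner).congr' ?_
  filter_upwards [eventually_gt_atTop 0] with t ht
  simp only [id]
  field_simp

theorem stmt11_general {n : ℕ} (φ : ℝ → ℝ) (p₁ L₁ c₁ c₂ : ℝ)
    (hp₁ : 1 < p₁) (hc₁ : 0 < c₁)
    (hφlim : Filter.Tendsto φ Filter.atTop Filter.atTop)
    (hφInc : ∀ s t : ℝ, 0 < s → s ≤ t → φ s / s ^ p₁ ≤ L₁ * (φ t / t ^ p₁))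
    (A : EuclideanSpace ℝ (Fin n) → EuclideanSpace ℝ (Fin n))
    (hcoer : ∀ ξ : EuclideanSpace ℝ (Fin n), c₁ * φ ‖ξ‖ ≤ inner (𝕜 := ℝ) (A ξ) ξ)
    (hgrowth : ∀ ξ : EuclideanSpace ℝ (Fin n), ξ ≠ 0 → ‖A ξ‖ ≤ c₂ * φ ‖ξ‖ / ‖ξ‖)
    (η : EuclideanSpace ℝ (Fin n)) (ξi : ℕ → EuclideanSpace ℝ (Fin n))
    (M : ℝ)
    (hI : ∀ i, inner (𝕜 := ℝ) (A (ξi i) - A η) (ξi i - η) ≤ M) :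
    ∃ M' : ℝ, ∀ i, ‖ξi i‖ ≤ M' := by
  have hlow : Tendsto (fun t => c₁ * φ t - c₂ * ‖η‖ * (φ t / t) - ‖A η‖ * t - ‖A η‖ * ‖η‖)
      atTop atTop :=
    tendsto_atTop_add_const_right _ _ (tendsto_mul_sub_mul_div_sub_mul_atTop _ _ hc₁
      (tendsto_div_self_atTop_of_almostIncreasing hp₁ hφlim hφInc))
  obtain ⟨T, hT⟩ :=
    ((hlow.eventually_gt_atTop M).and (eventually_gt_atTop 0)).exists_forall_of_atTop
  refine ⟨T, fun i => le_of_not_gt fun hi => ?_⟩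
  obtain ⟨hM, hpos⟩ := hT _ hi.le
  have hAξ : ‖A (ξi i)‖ * ‖η‖ ≤ c₂ * ‖η‖ * (φ ‖ξi i‖ / ‖ξi i‖) := by
    calc ‖A (ξi i)‖ * ‖η‖ ≤ c₂ * φ ‖ξi i‖ / ‖ξi i‖ * ‖η‖ :=
          mul_le_mul_of_nonneg_right (hgrowth _ (norm_pos_iff.mp hpos)) (norm_nonneg η)
      _ = c₂ * ‖η‖ * (φ ‖ξi i‖ / ‖ξi i‖) := by ring
  linarith [hI i, hcoer (ξi i), le_real_inner_sub_sub (A (ξi i)) (A η) (ξi i) η]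

/-- Under the structure conditions `c₁ φ(|ξ|) ≤ A(ξ)·ξ` and `|A(ξ)| ≤ c₂ φ(|ξ|)/|ξ|` for an
operator governed by a weak Φ-function `φ` satisfying `(aInc)_p` with `p > 1`, if the
monotonicity pairings `I_i = (A(ξ_i) − A(η))·(ξ_i − η)` are bounded above, then the
sequence `(ξ_i)` is bounded. -/
theorem stmt11 {n : ℕ} (φ ψ : ℝ → ℝ) (p₁ p₂ L₁ L₂ c₁ c₂ : ℝ)
    (hp₁ : 1 < p₁) (hp₂ : 1 < p₂) (hL₁ : 1 ≤ L₁) (hL₂ : 1 ≤ L₂) (hc₁ : 0 < c₁) (hc₂ : 0 < c₂)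
    (hφmono : MonotoneOn φ (Set.Ici 0)) (hφ0 : φ 0 = 0) (hφnn : ∀ t, 0 ≤ t → 0 ≤ φ t)
    (hφlim : Filter.Tendsto φ Filter.atTop Filter.atTop)
    (hφInc : ∀ s t : ℝ, 0 < s → s ≤ t → φ s / s ^ p₁ ≤ L₁ * (φ t / t ^ p₁))
    (hψmono : MonotoneOn ψ (Set.Ici 0)) (hψ0 : ψ 0 = 0) (hψnn : ∀ t, 0 ≤ t → 0 ≤ ψ t)
    (hψlim : Filter.Tendsto ψ Filter.atTop Filter.atTop)
    (hψInc : ∀ s t : ℝ, 0 < s → s ≤ t → ψ s / s ^ p₂ ≤ L₂ * (ψ t / t ^ p₂))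
    (A : EuclideanSpace ℝ (Fin n) → EuclideanSpace ℝ (Fin n))
    (hcoer : ∀ ξ : EuclideanSpace ℝ (Fin n), c₁ * φ ‖ξ‖ ≤ inner (𝕜 := ℝ) (A ξ) ξ)
    (hgrowth : ∀ ξ : EuclideanSpace ℝ (Fin n), ξ ≠ 0 → ‖A ξ‖ ≤ c₂ * φ ‖ξ‖ / ‖ξ‖)
    (η : EuclideanSpace ℝ (Fin n)) (ξi : ℕ → EuclideanSpace ℝ (Fin n))
    (M : ℝ)
    (hI : ∀ i, inner (𝕜 := ℝ) (A (ξi i) - A η) (ξi i - η) ≤ M) :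
    ∃ M' : ℝ, ∀ i, ‖ξi i‖ ≤ M' :=
  stmt11_general φ p₁ L₁ c₁ c₂ hp₁ hc₁ hφlim hφInc A hcoer hgrowth η ξi M hI
end
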